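/- arXiv:2305.01031 — 2 statements merged into one kernel-verified Lean document; each statement's English description precedes it below -/
import Mathlib

section
/- Palais–Smale boundedness via the AR condition: suppose f satisfies t f(x,t) ≥ β F(x,t) for |t| ≥ r₀ with β > 2, and (u_k) is a sequence of functions on D vanishing on ∂D such that |J_λ(u_k)| ≤ c and ‖J_λ'(u_k)‖ → 0 as k → ∞, where J_λ(u) = (1/(2λ))‖u‖² − ∫_D F(x,u) dμ. Then the sequence (u_k) is bounded in the Dirichlet norm ‖u‖ = (∫_D |∇u|² dμ)^{1/2}. -/
/-! Testing the derivative against `u_k` itself and subtracting `1/β` of it from the energy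
cancels the nonlinearity up to `β F(u) - u f(u)`, which the Ambrosetti–Rabinowitz condition
makes nonpositive for `|u| ≥ r₀` and which continuity bounds for `|u| ≤ r₀`. What remains is
`(β - 2) ‖u_k‖² ≤ A + B ‖u_k‖`, and a quadratic cannot be dominated by a linear function. -/

open Finset Filter

noncomputable def gInt {V : Type*} [Fintype V] (mu : V → ℝ) (D : Finset V) (f : V → ℝ) : ℝ :=
  ∑ x ∈ D, mu x * f x

noncomputable def slopeSq {V : Type*} [Fintype V] (w : V → V → ℝ) (mu : V → ℝ)
    (u : V → ℝ) (x : V) : ℝ :=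
  (1 / (2 * mu x)) * ∑ y, w x y * (u y - u x) ^ 2

noncomputable def gammaF {V : Type*} [Fintype V] (w : V → V → ℝ) (mu : V → ℝ)
    (u v : V → ℝ) (x : V) : ℝ :=
  (1 / (2 * mu x)) * ∑ y, w x y * (u y - u x) * (v y - v x)

noncomputable def lapl {V : Type*} [Fintype V] (w : V → V → ℝ) (mu : V → ℝ)
    (u : V → ℝ) (x : V) : ℝ :=
  (1 / mu x) * ∑ y, w x y * (u y - u x)

noncomputable def rayleighSet {V : Type*} [Fintype V] (w : V → V → ℝ) (mu : V → ℝ)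
    (D B : Finset V) : Set ℝ :=
  {r | ∃ u : V → ℝ, (∀ x ∈ B, u x = 0) ∧ (∃ x ∈ D, u x ≠ 0) ∧
    r = gInt mu D (slopeSq w mu u) / gInt mu D (fun x => (u x) ^ 2)}

theorem gammaF_self {V : Type*} [Fintype V] (w : V → V → ℝ) (mu : V → ℝ) (u : V → ℝ) :
    gammaF w mu u u = slopeSq w mu u := by
  funext x
  simp only [gammaF, slopeSq, mul_assoc, sq]

theorem exists_sub_mul_le_of_ambrosettiRabinowitz {g : ℝ → ℝ} (hg : Continuous g)
    {beta r0 : ℝ} (hAR : ∀ t : ℝ, r0 ≤ |t| → t * g t ≥ beta * ∫ s in (0:ℝ)..t, g s) :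
    ∃ C, ∀ t, beta * (∫ s in (0:ℝ)..t, g s) - g t * t ≤ C := by
  have hcont : Continuous fun t => beta * (∫ s in (0:ℝ)..t, g s) - g t * t :=
    (continuous_const.mul (intervalIntegral.continuous_primitive
      (fun a b => hg.intervalIntegrable a b) 0)).sub (hg.mul continuous_id)
  obtain ⟨C, hC⟩ := (isCompact_Icc (a := -r0) (b := r0)).exists_bound_of_continuousOn
    hcont.continuousOn
  refine ⟨max C 0, fun t => ?_⟩
  rcases le_or_gt r0 |t| with hlarge | hsmall
  · linarith [hAR t hlarge, le_max_right C 0]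
  · have hbound := hC t (abs_le.mp hsmall.le)
    rw [Real.norm_eq_abs] at hbound
    exact (le_abs_self _).trans (hbound.trans (le_max_left _ _))

theorem exists_gInt_sub_le_of_ambrosettiRabinowitz {V : Type*} [Fintype V]
    {mu : V → ℝ} {D : Finset V} (hmu : ∀ x ∈ D, 0 ≤ mu x)
    {f : V → ℝ → ℝ} (hf : ∀ x ∈ D, Continuous (f x)) {beta r0 : ℝ}
    (hAR : ∀ x ∈ D, ∀ t : ℝ, r0 ≤ |t| → t * f x t ≥ beta * ∫ s in (0:ℝ)..t, f x s) :
    ∃ C, ∀ v : V → ℝ, beta * gInt mu D (fun x => ∫ s in (0:ℝ)..(v x), f x s)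
      - gInt mu D (fun x => f x (v x) * v x) ≤ C := by
  have hpt : ∀ x ∈ D, ∃ C, ∀ t, beta * (∫ s in (0:ℝ)..t, f x s) - f x t * t ≤ C :=
    fun x hx => exists_sub_mul_le_of_ambrosettiRabinowitz (hf x hx) (hAR x hx)
  choose! C hC using hpt
  refine ⟨∑ x ∈ D, mu x * C x, fun v => ?_⟩
  simp only [gInt, mul_sum, ← sum_sub_distrib]
  refine sum_le_sum fun x hx => ?_
  calc beta * (mu x * ∫ s in (0:ℝ)..(v x), f x s) - mu x * (f x (v x) * v x)
      = mu x * (beta * (∫ s in (0:ℝ)..(v x), f x s) - f x (v x) * v x) := by ring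
    _ ≤ mu x * C x := mul_le_mul_of_nonneg_left (hC x hx (v x)) (hmu x hx)

/-- The key inequality `λ J(u) - (λ/β) ⟨J'(u), u⟩ ≥ (1/2 - 1/β) ‖u‖² - C`, with `N = ‖u‖²`,
`P = ∫ F(u)` and `Q = ∫ f(u) u`. -/
theorem sub_two_mul_le_of_energy_bounds {beta lam N P Q c C δ : ℝ} (hbeta : 0 ≤ beta)
    (hlam : 0 < lam) (hJ : 1 / (2 * lam) * N - P ≤ c) (hJ' : -δ ≤ 1 / lam * N - Q)
    (hAR : beta * P - Q ≤ C) :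
    (beta - 2) * N ≤ 2 * lam * (C + beta * c + δ) := by
  have hP : N - 2 * lam * P ≤ 2 * lam * c := by
    have := mul_le_mul_of_nonneg_left hJ (by positivity : 0 ≤ 2 * lam)
    rwa [mul_sub, ← mul_assoc, mul_one_div_cancel (by positivity), one_mul] at this
  have hQ : lam * Q ≤ N + lam * δ := by
    have := mul_le_mul_of_nonneg_left hJ' hlam.le
    rw [mul_sub, ← mul_assoc, mul_one_div_cancel hlam.ne', one_mul] at this
    linarith
  nlinarith [mul_le_mul_of_nonneg_left hP hbeta]

theorem sqrt_le_max_of_mul_le_add {a A B N : ℝ} (ha : 0 < a) (h : a * N ≤ A + B * √N) :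
    √N ≤ max 1 ((|A| + B) / a) := by
  rcases le_or_gt √N 1 with hs | hs
  · exact hs.trans (le_max_left _ _)
  · have hN : √N ^ 2 = N := Real.sq_sqrt (Real.sqrt_pos.mp (by linarith)).le
    refine le_max_of_le_right ((le_div_iff₀ ha).2 ?_)
    nlinarith [le_abs_self A, abs_nonneg A]

theorem stmt_11_general {V : Type*} [Fintype V] [DecidableEq V]
    (w : V → V → ℝ)
    (mu : V → ℝ) (hmu : ∀ x, 0 < mu x)
    (D B : Finset V)
    (f : V → ℝ → ℝ) (hf : ∀ x, Continuous (f x))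
    (beta r0 : ℝ) (hbeta : 2 < beta)
    (hAR : ∀ x ∈ D, ∀ t : ℝ, r0 ≤ |t| →
      t * f x t ≥ beta * ∫ s in (0:ℝ)..t, f x s)
    (lam : ℝ) (hlam : 0 < lam)
    (u : ℕ → V → ℝ) (hu : ∀ k x, x ∉ D \ B → u k x = 0)
    (c : ℝ)
    (hc : ∀ k, |(1 / (2 * lam)) * gInt mu D (slopeSq w mu (u k))
      - gInt mu D (fun x => ∫ s in (0:ℝ)..(u k x), f x s)| ≤ c)
    (eps : ℕ → ℝ) (heps : Tendsto eps atTop (nhds 0))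
    (heps' : ∀ k (v : V → ℝ), (∀ x, x ∉ D \ B → v x = 0) →
      |(1 / lam) * gInt mu D (gammaF w mu (u k) v)
        - gInt mu D (fun x => f x (u k x) * v x)| ≤
        eps k * Real.sqrt (gInt mu D (slopeSq w mu v))) :
    ∃ M : ℝ, ∀ k, Real.sqrt (gInt mu D (slopeSq w mu (u k))) ≤ M := by
  obtain ⟨C, hC⟩ := exists_gInt_sub_le_of_ambrosettiRabinowitz (fun x _ => (hmu x).le)
    (fun x _ => hf x) hAR
  obtain ⟨E, hE⟩ := heps.bddAbove_range
  refine ⟨max 1 ((|2 * lam * (C + beta * c)| + 2 * lam * E) / (beta - 2)), fun k => ?_⟩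
  set N := gInt mu D (slopeSq w mu (u k))
  have hJ' := (abs_le.mp (heps' k (u k) (hu k))).1
  rw [gammaF_self] at hJ'
  have hepsE : eps k * √N ≤ E * √N :=
    mul_le_mul_of_nonneg_right (hE ⟨k, rfl⟩) (Real.sqrt_nonneg _)
  refine sqrt_le_max_of_mul_le_add (by linarith) ?_
  calc (beta - 2) * N
      ≤ 2 * lam * (C + beta * c + eps k * √N) :=
        sub_two_mul_le_of_energy_bounds (by linarith) hlam (abs_le.mp (hc k)).2 hJ' (hC (u k))
    _ ≤ 2 * lam * (C + beta * c + E * √N) := by gcongr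
    _ = 2 * lam * (C + beta * c) + 2 * lam * E * √N := by ring

theorem stmt_11 {V : Type*} [Fintype V] [DecidableEq V]
    (w : V → V → ℝ) (hsymm : ∀ x y, w x y = w y x)
    (hnonneg : ∀ x y, 0 ≤ w x y) (hdiag : ∀ x, w x x = 0)
    (mu : V → ℝ) (hmu : ∀ x, 0 < mu x)
    (D B : Finset V) (hBD : B ⊆ D)
    (hbdry : ∀ x ∈ D, (x ∈ B ↔ ∃ y, y ∉ D ∧ 0 < w x y))
    (hBne : B.Nonempty) (hIne : (D \ B).Nonempty)
    (f : V → ℝ → ℝ) (hf : ∀ x, Continuous (f x))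
    (beta r0 : ℝ) (hbeta : 2 < beta) (hr0 : 0 < r0)
    (hAR : ∀ x ∈ D, ∀ t : ℝ, r0 ≤ |t| →
      t * f x t ≥ beta * ∫ s in (0:ℝ)..t, f x s)
    (lam : ℝ) (hlam : 0 < lam)
    (u : ℕ → V → ℝ) (hu : ∀ k x, x ∉ D \ B → u k x = 0)
    (c : ℝ)
    (hc : ∀ k, |(1 / (2 * lam)) * gInt mu D (slopeSq w mu (u k))
      - gInt mu D (fun x => ∫ s in (0:ℝ)..(u k x), f x s)| ≤ c)
    (eps : ℕ → ℝ) (heps : Tendsto eps atTop (nhds 0))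
    (heps' : ∀ k (v : V → ℝ), (∀ x, x ∉ D \ B → v x = 0) →
      |(1 / lam) * gInt mu D (gammaF w mu (u k) v)
        - gInt mu D (fun x => f x (u k x) * v x)| ≤
        eps k * Real.sqrt (gInt mu D (slopeSq w mu v))) :
    ∃ M : ℝ, ∀ k, Real.sqrt (gInt mu D (slopeSq w mu (u k))) ≤ M :=
  stmt_11_general w mu hmu D B f hf beta r0 hbeta hAR lam hlam u hu c hc eps heps heps'
end

section
/- Nonnegativity of solutions: let α : D → ℝ with α ≤ 0 on D, and f₊ : D×ℝ → [0,∞) with f₊(x,t) = 0 for t < 0. If u vanishes on ∂D and solves −Δ_μ u(x) = α(x)u(x) + f₊(x,u⁺(x)) on D° in the weak sense, then ∫_D |∇u⁻|² dμ = 0 and hence u ≥ 0 on D, where u⁻ = max{−u,0}. -/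
open Finset Filter

/-!
Test the weak equation with `v = u⁻`. Edge by edge,
`(u y - u x) (u⁻ y - u⁻ x) ≤ -(u⁻ y - u⁻ x)²`, while `α u u⁻ = -α (u⁻)² ≥ 0` and `f₊ u⁻ ≥ 0`;
so the Dirichlet energy of `u⁻` is both nonnegative and nonpositive, hence zero. Then `u⁻` is
constant along every edge of the connected domain `D`, and it vanishes on the boundary.

Mathlib's `u⁻` is definitionally the statement's `fun z => max (-(u z)) 0`.
-/

lemma sq_negPart_sub_le_mul (a b : ℝ) : (b⁻ - a⁻) ^ 2 ≤ (a - b) * (b⁻ - a⁻) := by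
  rcases le_total a 0 with ha | ha <;> rcases le_total b 0 with hb | hb <;>
    simp only [negPart_eq_neg.2, negPart_eq_zero.2, ha, hb] <;> nlinarith

lemma mul_negPart_eq_neg_sq (a : ℝ) : a * a⁻ = -a⁻ ^ 2 := by
  rcases le_total a 0 with ha | ha
  · rw [negPart_eq_neg.2 ha]; ring
  · simp [negPart_eq_zero.2 ha]

section GraphEnergy

variable {V : Type*} [Fintype V] {w : V → V → ℝ} {mu : V → ℝ}

lemma gInt_nonneg {D : Finset V} {f : V → ℝ} (hmu : ∀ x ∈ D, 0 ≤ mu x)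
    (hf : ∀ x ∈ D, 0 ≤ f x) : 0 ≤ gInt mu D f :=
  sum_nonneg fun x hx => mul_nonneg (hmu x hx) (hf x hx)

lemma slopeSq_nonneg {x : V} (hw : ∀ y, 0 ≤ w x y) (hmu : 0 ≤ mu x) (u : V → ℝ) :
    0 ≤ slopeSq w mu u x :=
  mul_nonneg (by positivity) (sum_nonneg fun y _ => mul_nonneg (hw y) (sq_nonneg _))

lemma slopeSq_negPart_le_neg_gammaF {x : V} (hw : ∀ y, 0 ≤ w x y) (hmu : 0 ≤ mu x)
    (u : V → ℝ) : slopeSq w mu u⁻ x ≤ -gammaF w mu u u⁻ x := by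
  rw [slopeSq, gammaF, ← mul_neg, ← sum_neg_distrib]
  gcongr with y
  simp only [Pi.negPart_apply]
  have := mul_le_mul_of_nonneg_left (sq_negPart_sub_le_mul (u x) (u y)) (hw y)
  linarith

lemma eq_of_slopeSq_eq_zero {v : V → ℝ} {x y : V} (hw : ∀ z, 0 ≤ w x z) (hmu : 0 < mu x)
    (h : slopeSq w mu v x = 0) (hxy : 0 < w x y) : v y = v x := by
  have hsum : ∑ z, w x z * (v z - v x) ^ 2 = 0 := by
    simpa [slopeSq, hmu.ne'] using h
  have hy := (sum_eq_zero_iff_of_nonneg fun z _ => mul_nonneg (hw z) (sq_nonneg _)).1 hsum y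
    (mem_univ y)
  simpa [hxy.ne', sub_eq_zero] using hy

lemma gInt_slopeSq_negPart_eq_zero {D : Finset V} {u alpha g : V → ℝ}
    (hw : ∀ x y, 0 ≤ w x y) (hmu : ∀ x, 0 ≤ mu x)
    (halpha : ∀ x ∈ D, alpha x ≤ 0) (hg : ∀ x ∈ D, 0 ≤ g x)
    (hweak : gInt mu D (gammaF w mu u u⁻) - gInt mu D (fun x => alpha x * u x * u⁻ x) =
      gInt mu D (fun x => g x * u⁻ x)) :
    gInt mu D (slopeSq w mu u⁻) = 0 := by
  have hmuD : ∀ x ∈ D, 0 ≤ mu x := fun x _ => hmu x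
  have halpha_term : 0 ≤ gInt mu D (fun x => alpha x * u x * u⁻ x) :=
    gInt_nonneg hmuD fun x hx => by
      rw [mul_assoc, Pi.negPart_apply, mul_negPart_eq_neg_sq]
      exact mul_nonneg_of_nonpos_of_nonpos (halpha x hx) (neg_nonpos.2 (sq_nonneg _))
  have hg_term : 0 ≤ gInt mu D (fun x => g x * u⁻ x) :=
    gInt_nonneg hmuD fun x hx => mul_nonneg (hg x hx) (negPart_nonneg _)
  have hle : gInt mu D (slopeSq w mu u⁻) ≤ -gInt mu D (gammaF w mu u u⁻) := by
    rw [gInt, gInt, ← sum_neg_distrib]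
    gcongr with x
    rw [← mul_neg]
    exact mul_le_mul_of_nonneg_left (slopeSq_negPart_le_neg_gammaF (hw x) (hmu x) u) (hmu x)
  have hge : 0 ≤ gInt mu D (slopeSq w mu u⁻) :=
    gInt_nonneg hmuD fun x _ => slopeSq_nonneg (hw x) (hmu x) _
  linarith

lemma eq_of_gInt_slopeSq_eq_zero {D : Finset V} {v : V → ℝ} (hw : ∀ x y, 0 ≤ w x y)
    (hmu : ∀ x, 0 < mu x) (h : gInt mu D (slopeSq w mu v) = 0) {x y : V} (hx : x ∈ D)
    (hxy : 0 < w x y) : v y = v x := by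
  have hterms := sum_eq_zero_iff_of_nonneg (fun z _ =>
    mul_nonneg (hmu z).le (slopeSq_nonneg (hw z) (hmu z).le v)) |>.1 h x hx
  exact eq_of_slopeSq_eq_zero (hw x) (hmu x)
    ((mul_eq_zero.1 hterms).resolve_left (hmu x).ne') hxy

end GraphEnergy

lemma Relation.ReflTransGen.apply_eq_of_rel {α β : Type*} {r : α → α → Prop} {f : α → β}
    (hf : ∀ a b, r a b → f a = f b) {a b : α} (h : Relation.ReflTransGen r a b) : f a = f b := by
  induction h with
  | refl => rfl
  | tail _ hbc ih => exact ih.trans (hf _ _ hbc)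

theorem stmt_13_general {V : Type*} [Fintype V] [DecidableEq V]
    (w : V → V → ℝ)
    (hnonneg : ∀ x y, 0 ≤ w x y)
    (mu : V → ℝ) (hmu : ∀ x, 0 < mu x)
    (D B : Finset V) (hBD : B ⊆ D)
    (hBne : B.Nonempty)
    (hconn : ∀ x ∈ D, ∀ y ∈ D,
      Relation.ReflTransGen (fun a b => a ∈ D ∧ b ∈ D ∧ 0 < w a b) x y)
    (alpha : V → ℝ) (halpha : ∀ x ∈ D, alpha x ≤ 0)
    (fp : V → ℝ → ℝ) (hfp0 : ∀ x t, 0 ≤ fp x t)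
    (u : V → ℝ) (hu : ∀ x, x ∉ D \ B → u x = 0)
    (hweak : ∀ v : V → ℝ, (∀ x, x ∉ D \ B → v x = 0) →
      gInt mu D (gammaF w mu u v) - gInt mu D (fun x => alpha x * u x * v x) =
        gInt mu D (fun x => fp x (max (u x) 0) * v x)) :
    gInt mu D (slopeSq w mu (fun z => max (-(u z)) 0)) = 0 ∧ ∀ x ∈ D, 0 ≤ u x := by
  have hu_neg : ∀ x, x ∉ D \ B → u⁻ x = 0 := fun x hx => by simp [hu x hx]
  have henergy : gInt mu D (slopeSq w mu u⁻) = 0 :=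
    gInt_slopeSq_negPart_eq_zero hnonneg (fun x => (hmu x).le) halpha (fun x _ => hfp0 x _)
      (hweak u⁻ hu_neg)
  refine ⟨henergy, fun x hx => ?_⟩
  obtain ⟨b, hb⟩ := hBne
  have hxb : u⁻ x = u⁻ b := (hconn x hx b (hBD hb)).apply_eq_of_rel fun a c ⟨ha, _, hac⟩ =>
    (eq_of_gInt_slopeSq_eq_zero hnonneg hmu henergy ha hac).symm
  rw [← negPart_eq_zero, ← Pi.negPart_apply, hxb]
  exact hu_neg b fun hb' => (mem_sdiff.1 hb').2 hb

theorem stmt_13 {V : Type*} [Fintype V] [DecidableEq V]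
    (w : V → V → ℝ) (hsymm : ∀ x y, w x y = w y x)
    (hnonneg : ∀ x y, 0 ≤ w x y) (hdiag : ∀ x, w x x = 0)
    (mu : V → ℝ) (hmu : ∀ x, 0 < mu x)
    (D B : Finset V) (hBD : B ⊆ D)
    (hbdry : ∀ x ∈ D, (x ∈ B ↔ ∃ y, y ∉ D ∧ 0 < w x y))
    (hBne : B.Nonempty) (hIne : (D \ B).Nonempty)
    (hconn : ∀ x ∈ D, ∀ y ∈ D,
      Relation.ReflTransGen (fun a b => a ∈ D ∧ b ∈ D ∧ 0 < w a b) x y)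
    (alpha : V → ℝ) (halpha : ∀ x ∈ D, alpha x ≤ 0)
    (fp : V → ℝ → ℝ) (hfp0 : ∀ x t, 0 ≤ fp x t) (hfpneg : ∀ x t, t < 0 → fp x t = 0)
    (u : V → ℝ) (hu : ∀ x, x ∉ D \ B → u x = 0)
    (hweak : ∀ v : V → ℝ, (∀ x, x ∉ D \ B → v x = 0) →
      gInt mu D (gammaF w mu u v) - gInt mu D (fun x => alpha x * u x * v x) =
        gInt mu D (fun x => fp x (max (u x) 0) * v x)) :
    gInt mu D (slopeSq w mu (fun z => max (-(u z)) 0)) = 0 ∧ ∀ x ∈ D, 0 ≤ u x :=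
  stmt_13_general w hnonneg mu hmu D B hBD hBne hconn alpha halpha fp hfp0 u hu hweak
end
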